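/- arXiv:1902.11176 — 3 statements merged into one kernel-verified Lean document; each statement's English description precedes it below -/
import Mathlib

section
/- For every u ∈ ℝ^d, the identity ∑_{g∈G} exp(−½‖y − gθ*‖²) · ⟨y − gθ*, gu⟩ = 0 holds for all y ∈ ℝ^d if and only if H̄u = 0. -/
open scoped BigOperators RealInnerProductSpace

noncomputable section

abbrev Euc (d : ℕ) := EuclideanSpace ℝ (Fin d)
abbrev Iso (d : ℕ) := Euc d ≃ₗᵢ[ℝ] Euc d

/-- The average `H̄ = (1/|H|) ∑_{h∈H} h` of a finite subgroup of linear isometries. -/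
def groupAvg {d : ℕ} (H : Subgroup (Iso d)) [Fintype H] : Euc d →ₗ[ℝ] Euc d :=
  (Fintype.card H : ℝ)⁻¹ • ∑ h : H, ((h : Iso d).toLinearEquiv : Euc d →ₗ[ℝ] Euc d)

open Real Filter Topology Finset

/-!
Since `‖gθ*‖ = ‖θ*‖`, we have `exp(-½‖y - gθ*‖²) = exp(-½‖y - θ*‖²) · exp(-⟨y, θ* - gθ*⟩)`, and
`⟨θ*, θ* - gθ*⟩ = ½‖θ* - gθ*‖²` is positive unless `g ∈ H`. So after dividing the score by
`exp(-½‖y - θ*‖²)` and putting `y = tθ* + z`, the terms with `g ∉ H` decay exponentially as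
`t → ∞`, while those with `g ∈ H` add up to `⟨y - θ*, ∑_{h∈H} hu⟩`, which is affine in `t`.
Hence `⟨z - θ*, ∑_{h∈H} hu⟩ = 0` for every `z`, i.e. `∑_{h∈H} hu = 0`. Conversely, the
reindexing `g ↦ gh` shows that the score is unchanged when `u` is replaced by `hu` for
`h ∈ H`, so by linearity in `u`, `|H|` times the score of `u` is the score of `∑_{h∈H} hu`.
-/

lemma tendsto_exp_neg_affine_mul_affine {b : ℝ} (hb : 0 < b) (k c e : ℝ) :
    Tendsto (fun t => exp (-(b * t + k)) * (c * t + e)) atTop (𝓝 0) := by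
  have hbt : Tendsto (fun t => b * t) atTop atTop := tendsto_id.const_mul_atTop hb
  have hpoly : Tendsto (fun t => b * t * exp (-(b * t))) atTop (𝓝 0) := by
    simpa [Function.comp_def] using (tendsto_pow_mul_exp_neg_atTop_nhds_zero 1).comp hbt
  have hexp : Tendsto (fun t => exp (-(b * t))) atTop (𝓝 0) :=
    tendsto_exp_neg_atTop_nhds_zero.comp hbt
  have key : (fun t => exp (-(b * t + k)) * (c * t + e)) =
      fun t => exp (-k) * (c / b * (b * t * exp (-(b * t))) + e * exp (-(b * t))) := by
    funext t
    rw [neg_add, exp_add]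
    field_simp
  rw [key]
  simpa using ((hpoly.const_mul (c / b)).add (hexp.const_mul e)).const_mul (exp (-k))

lemma eq_zero_of_tendsto_affine {a b : ℝ} (h : Tendsto (fun t => a * t + b) atTop (𝓝 0)) :
    a = 0 ∧ b = 0 := by
  have hshift := (h.comp (tendsto_atTop_add_const_right _ 1 tendsto_id)).sub h
  obtain rfl : a = 0 := by
    simpa [Function.comp_def, mul_add] using hshift
  simpa using h

section

variable {E : Type*} [NormedAddCommGroup E] [InnerProductSpace ℝ E]

lemma tendsto_exp_neg_inner_mul_inner {θ w : E} (hθw : 0 < ⟪θ, w⟫) (z p q : E) :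
    Tendsto (fun t : ℝ => exp (-⟪t • θ + z, w⟫) * ⟪t • θ + z - p, q⟫) atTop (𝓝 0) := by
  simpa only [inner_add_left, inner_sub_left, real_inner_smul_left, mul_comm _ (_ : ℝ),
    add_sub_assoc] using
    tendsto_exp_neg_affine_mul_affine hθw ⟪z, w⟫ ⟪θ, q⟫ ⟪z - p, q⟫

lemma norm_sub_sq_eq_of_norm_eq {a b : E} (hab : ‖a‖ = ‖b‖) (y : E) :
    ‖y - b‖ ^ 2 = ‖y - a‖ ^ 2 + 2 * ⟪y, a - b⟫ := by
  rw [norm_sub_sq_real, norm_sub_sq_real, inner_sub_right, hab]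
  ring

lemma inner_sub_pos_of_norm_eq {a b : E} (hab : ‖a‖ = ‖b‖) (hne : a ≠ b) : 0 < ⟪a, a - b⟫ := by
  have hsq := norm_sub_sq_eq_of_norm_eq hab a
  have hpos : 0 < ‖a - b‖ := norm_pos_iff.mpr (sub_ne_zero.mpr hne)
  rw [sub_self, norm_zero] at hsq
  nlinarith

def gaussianScore (G : Subgroup (E ≃ₗᵢ[ℝ] E)) [Fintype G] (θ u y : E) : ℝ :=
  ∑ g : G, exp (-(1 / 2) * ‖y - (g : E ≃ₗᵢ[ℝ] E) θ‖ ^ 2) *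
    ⟪y - (g : E ≃ₗᵢ[ℝ] E) θ, (g : E ≃ₗᵢ[ℝ] E) u⟫

open scoped Classical

variable {G H : Subgroup (E ≃ₗᵢ[ℝ] E)} [Fintype G] [Fintype H] {θ : E}

lemma gaussianScore_sum {ι : Type*} (s : Finset ι) (u : ι → E) (y : E) :
    gaussianScore G θ (∑ i ∈ s, u i) y = ∑ i ∈ s, gaussianScore G θ (u i) y := by
  simp only [gaussianScore, map_sum, inner_sum, mul_sum]
  exact sum_comm

lemma gaussianScore_map_of_mem_of_fixed {h : E ≃ₗᵢ[ℝ] E} (hG : h ∈ G) (hθ : h θ = θ) (u y : E) :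
    gaussianScore G θ (h u) y = gaussianScore G θ u y :=
  Fintype.sum_equiv (Equiv.mulRight ⟨h, hG⟩) _ _ fun g => by simp [hθ]

lemma card_mul_gaussianScore (hH : ∀ h ∈ H, h ∈ G ∧ h θ = θ) (u y : E) :
    Fintype.card H * gaussianScore G θ u y =
      gaussianScore G θ (∑ h : H, (h : E ≃ₗᵢ[ℝ] E) u) y := by
  rw [gaussianScore_sum, ← card_univ, ← nsmul_eq_mul, ← sum_const]
  refine sum_congr rfl fun h _ => ?_
  obtain ⟨hG, hθ⟩ := hH h h.2
  exact (gaussianScore_map_of_mem_of_fixed hG hθ u y).symm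

lemma sum_filter_fixed_eq_sum (hH : ∀ g, g ∈ H ↔ g ∈ G ∧ g θ = θ) {M : Type*}
    [AddCommMonoid M] (f : (E ≃ₗᵢ[ℝ] E) → M) :
    ∑ g ∈ univ.filter (fun g : G => (g : E ≃ₗᵢ[ℝ] E) θ = θ), f g = ∑ h : H, f h :=
  sum_bij (fun g hg => ⟨g, (hH g).mpr ⟨g.2, (mem_filter.mp hg).2⟩⟩) (fun _ _ => mem_univ _)
    (fun _ _ _ _ hgg' => Subtype.ext (Subtype.mk.inj hgg'))
    (fun h _ => ⟨⟨h, ((hH h).mp h.2).1⟩, mem_filter.mpr ⟨mem_univ _, ((hH h).mp h.2).2⟩, rfl⟩)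
    (fun _ _ => rfl)

lemma gaussianScore_eq_exp_mul (hH : ∀ g, g ∈ H ↔ g ∈ G ∧ g θ = θ) (u y : E) :
    gaussianScore G θ u y = exp (-(1 / 2) * ‖y - θ‖ ^ 2) *
      (⟪y - θ, ∑ h : H, (h : E ≃ₗᵢ[ℝ] E) u⟫ +
        ∑ g ∈ univ.filter (fun g : G => (g : E ≃ₗᵢ[ℝ] E) θ ≠ θ),
          exp (-⟪y, θ - (g : E ≃ₗᵢ[ℝ] E) θ⟫) *
            ⟪y - (g : E ≃ₗᵢ[ℝ] E) θ, (g : E ≃ₗᵢ[ℝ] E) u⟫) := by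
  have hfactor : ∀ g : G, exp (-(1 / 2) * ‖y - (g : E ≃ₗᵢ[ℝ] E) θ‖ ^ 2) =
      exp (-(1 / 2) * ‖y - θ‖ ^ 2) * exp (-⟪y, θ - (g : E ≃ₗᵢ[ℝ] E) θ⟫) := fun g => by
    rw [norm_sub_sq_eq_of_norm_eq ((g : E ≃ₗᵢ[ℝ] E).norm_map θ).symm, ← exp_add]
    ring_nf
  simp only [gaussianScore, hfactor, mul_assoc, ← mul_sum]
  rw [← sum_filter_add_sum_filter_not univ (fun g : G => (g : E ≃ₗᵢ[ℝ] E) θ = θ), inner_sum,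
    ← sum_filter_fixed_eq_sum hH fun g => ⟪y - θ, g u⟫]
  congr 2
  refine sum_congr rfl fun g hg => ?_
  rw [(mem_filter.mp hg).2]
  simp

lemma sum_eq_zero_of_gaussianScore_eq_zero (hH : ∀ g, g ∈ H ↔ g ∈ G ∧ g θ = θ) {u : E}
    (hS : ∀ y, gaussianScore G θ u y = 0) : ∑ h : H, (h : E ≃ₗᵢ[ℝ] E) u = 0 := by
  set v := ∑ h : H, (h : E ≃ₗᵢ[ℝ] E) u
  set rest := fun y => ∑ g ∈ univ.filter (fun g : G => (g : E ≃ₗᵢ[ℝ] E) θ ≠ θ),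
    exp (-⟪y, θ - (g : E ≃ₗᵢ[ℝ] E) θ⟫) * ⟪y - (g : E ≃ₗᵢ[ℝ] E) θ, (g : E ≃ₗᵢ[ℝ] E) u⟫
  have hcancel : ∀ y, ⟪y - θ, v⟫ = -rest y := fun y => by
    have := hS y
    rw [gaussianScore_eq_exp_mul hH, mul_eq_zero] at this
    exact eq_neg_of_add_eq_zero_left (this.resolve_left (exp_pos _).ne')
  have hrest : ∀ z, Tendsto (fun t : ℝ => rest (t • θ + z)) atTop (𝓝 0) := fun z => by
    simpa using tendsto_finsetSum (univ.filter fun g : G => (g : E ≃ₗᵢ[ℝ] E) θ ≠ θ)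
      fun g hg => tendsto_exp_neg_inner_mul_inner (inner_sub_pos_of_norm_eq
        ((g : E ≃ₗᵢ[ℝ] E).norm_map θ).symm (Ne.symm (mem_filter.mp hg).2)) z _ _
  have horth : ∀ z, ⟪z - θ, v⟫ = 0 := fun z => by
    have : Tendsto (fun t : ℝ => ⟪θ, v⟫ * t + ⟪z - θ, v⟫) atTop (𝓝 0) := by
      refine (neg_zero (G := ℝ) ▸ (hrest z).neg).congr fun t => ?_
      rw [← hcancel, add_sub_assoc, inner_add_left, real_inner_smul_left, mul_comm]
    exact (eq_zero_of_tendsto_affine this).2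
  simpa using horth (θ + v)

lemma gaussianScore_eq_zero_iff (hH : ∀ g, g ∈ H ↔ g ∈ G ∧ g θ = θ) (u : E) :
    (∀ y, gaussianScore G θ u y = 0) ↔ ∑ h : H, (h : E ≃ₗᵢ[ℝ] E) u = 0 := by
  refine ⟨sum_eq_zero_of_gaussianScore_eq_zero hH, fun hv y => ?_⟩
  have hcard : (Fintype.card H : ℝ) ≠ 0 := Nat.cast_ne_zero.mpr Fintype.card_ne_zero
  refine (mul_eq_zero.mp ?_).resolve_left hcard
  rw [card_mul_gaussianScore (fun h hh => (hH h).mp hh), hv]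
  simp [gaussianScore]

end

lemma groupAvg_apply_eq_zero_iff {d : ℕ} (H : Subgroup (Iso d)) [Fintype H] (u : Euc d) :
    groupAvg H u = 0 ↔ ∑ h : H, (h : Iso d) u = 0 := by
  simp [groupAvg, LinearMap.sum_apply, Fintype.card_ne_zero]

/-- `∑_{g∈G} exp(-½‖y-gθ*‖²) ⟨y-gθ*, gu⟩ = 0` for all `y` iff `H̄u = 0`. -/
theorem score_vanishes_iff {d : ℕ} (G : Subgroup (Iso d)) [Fintype G] (θstar : Euc d)
    (H : Subgroup (Iso d)) [Fintype H]
    (hH : ∀ g : Iso d, g ∈ H ↔ g ∈ G ∧ g θstar = θstar)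
    (u : Euc d) :
    (∀ y : Euc d,
        ∑ g : G, Real.exp (-(1 / 2) * ‖y - (g : Iso d) θstar‖ ^ 2) *
          ⟪y - (g : Iso d) θstar, (g : Iso d) u⟫ = 0) ↔
      groupAvg H u = 0 :=
  (gaussianScore_eq_zero_iff hH u).trans (groupAvg_apply_eq_zero_iff H u).symm
end
end

section
/- If u ∈ ℝ^d satisfies H̄u = 0 and, for every y ∈ ℝ^d, ∑_{g∈G} exp(−½‖y − gθ*‖²) · ( ⟨y − gθ*, gu⟩² − ‖u‖² ) = 0, then u = 0. -/
open scoped BigOperators RealInnerProductSpace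

noncomputable section

/-!
Since every `h ∈ H` fixes `θ*`, `H̄u = 0` forces `⟪θ*, u⟫ = 0`, hence `⟪gθ*, gu⟫ = 0` for all `g`.
On the ray `y = c θ*`, dividing by the Gaussian weight of `θ*` turns the `g`-th summand into
`exp(-½‖θ* - gθ*‖² c) ((c ⟪θ*, gu⟫)² - ‖u‖²)`. As `c → ∞` the summands with `gθ* ≠ θ*` decay,
while those with `gθ* = θ*` are constantly `-‖u‖²`, so the sum tends to `-|H| ‖u‖²`, which must be `0`.
-/

open Real Filter Topology

lemma inner_groupAvg_apply_of_forall_mem_fixed {d : ℕ} (H : Subgroup (Iso d)) [Fintype H]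
    {v : Euc d} (hv : ∀ h ∈ H, h v = v) (u : Euc d) :
    ⟪v, groupAvg H u⟫ = ⟪v, u⟫ := by
  have hterm : ∀ h : H, ⟪v, (h : Iso d) u⟫ = ⟪v, u⟫ := fun h => by
    conv_lhs => rw [← hv h h.2]
    exact LinearIsometryEquiv.inner_map_map _ _ _
  have hcard : (Fintype.card H : ℝ) ≠ 0 := by exact_mod_cast Fintype.card_ne_zero
  simp only [groupAvg, LinearMap.smul_apply, LinearMap.coe_sum, Finset.sum_apply,
    inner_smul_right, inner_sum, LinearEquiv.coe_coe, LinearIsometryEquiv.coe_toLinearEquiv,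
    hterm, Finset.sum_const, Finset.card_univ, nsmul_eq_mul]
  field_simp

section

variable {E : Type*} [NormedAddCommGroup E] [InnerProductSpace ℝ E]

lemma norm_smul_sub_sq_of_norm_eq {θ w : E} (h : ‖w‖ = ‖θ‖) (c : ℝ) :
    ‖c • θ - w‖ ^ 2 = ‖c • θ - θ‖ ^ 2 + c * ‖θ - w‖ ^ 2 := by
  simp only [norm_sub_sq_real, norm_smul, real_inner_smul_left, real_inner_self_eq_norm_sq, h,
    Real.norm_eq_abs, mul_pow, sq_abs]
  ring

lemma exp_neg_norm_smul_sub_sq_mul (g : E ≃ₗᵢ[ℝ] E) {θ u : E} (hθu : ⟪θ, u⟫ = 0) (c a : ℝ) :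
    exp (-(1 / 2) * ‖c • θ - g θ‖ ^ 2) * (⟪c • θ - g θ, g u⟫ ^ 2 - a) =
      exp (-(1 / 2) * ‖c • θ - θ‖ ^ 2) *
        (exp (-(1 / 2 * ‖θ - g θ‖ ^ 2 * c)) * ((c * ⟪θ, g u⟫) ^ 2 - a)) := by
  have hinner : ⟪c • θ - g θ, g u⟫ = c * ⟪θ, g u⟫ := by
    rw [inner_sub_left, real_inner_smul_left, g.inner_map_map, hθu, sub_zero]
  rw [hinner, norm_smul_sub_sq_of_norm_eq (g.norm_map θ), ← mul_assoc, ← exp_add]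
  ring_nf

end

lemma tendsto_exp_neg_mul_mul_sq_sub_atTop {b : ℝ} (hb : 0 < b) (p a : ℝ) :
    Tendsto (fun c : ℝ => exp (-(b * c)) * ((c * p) ^ 2 - a)) atTop (𝓝 0) := by
  have hbc : Tendsto (fun c : ℝ => b * c) atTop atTop := tendsto_id.const_mul_atTop hb
  have hsq := ((tendsto_pow_mul_exp_neg_atTop_nhds_zero 2).comp hbc).const_mul (p ^ 2 / b ^ 2)
  have hexp := (tendsto_exp_neg_atTop_nhds_zero.comp hbc).const_mul a
  convert hsq.sub hexp using 2 with c
  · simp only [Function.comp_apply]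
    field_simp
  · simp

lemma eq_zero_of_forall_sum_exp_neg_mul_mul_sq_sub_eq_zero {ι : Type*} [Fintype ι]
    {b p : ι → ℝ} {a : ℝ} (hb : ∀ i, 0 ≤ b i) (hp : ∀ i, b i = 0 → p i = 0) {i₀ : ι}
    (hi₀ : b i₀ = 0) (h : ∀ c, ∑ i, exp (-(b i * c)) * ((c * p i) ^ 2 - a) = 0) : a = 0 := by
  classical
  have hterm : ∀ i, Tendsto (fun c : ℝ => exp (-(b i * c)) * ((c * p i) ^ 2 - a)) atTop
      (𝓝 (if b i = 0 then -a else 0)) := fun i => by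
    split_ifs with hbi
    · simp [hbi, hp i hbi]
    · exact tendsto_exp_neg_mul_mul_sq_sub_atTop ((hb i).lt_of_ne' hbi) _ _
  have hlim := tendsto_nhds_unique (tendsto_finsetSum _ fun i _ => hterm i)
    (tendsto_const_nhds.congr fun c => (h c).symm)
  rw [Finset.sum_ite, Finset.sum_const_zero, add_zero, Finset.sum_const, nsmul_eq_mul] at hlim
  have hcard : (0 : ℝ) < (Finset.univ.filter fun i => b i = 0).card := by
    exact_mod_cast Finset.card_pos.mpr ⟨i₀, by simp [hi₀]⟩
  simpa [hcard.ne'] using hlim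

/-- If `H̄u = 0` and
`∑_{g∈G} exp(-½‖y-gθ*‖²)(⟨y-gθ*, gu⟩² - ‖u‖²) = 0` for all `y`, then `u = 0`. -/
theorem second_order_score_vanishes {d : ℕ} (G : Subgroup (Iso d)) [Fintype G] (θstar : Euc d)
    (H : Subgroup (Iso d)) [Fintype H]
    (hH : ∀ g : Iso d, g ∈ H ↔ g ∈ G ∧ g θstar = θstar)
    (u : Euc d) (hu : groupAvg H u = 0)
    (hvan : ∀ y : Euc d,
      ∑ g : G, Real.exp (-(1 / 2) * ‖y - (g : Iso d) θstar‖ ^ 2) *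
        (⟪y - (g : Iso d) θstar, (g : Iso d) u⟫ ^ 2 - ‖u‖ ^ 2) = 0) :
    u = 0 := by
  have hθu : ⟪θstar, u⟫ = 0 := by
    rw [← inner_groupAvg_apply_of_forall_mem_fixed H (fun h hh => ((hH h).mp hh).2), hu,
      inner_zero_right]
  have hray : ∀ c : ℝ, ∑ g : G, exp (-(1 / 2 * ‖θstar - (g : Iso d) θstar‖ ^ 2 * c)) *
      ((c * ⟪θstar, (g : Iso d) u⟫) ^ 2 - ‖u‖ ^ 2) = 0 := fun c => by
    simpa only [exp_neg_norm_smul_sub_sq_mul _ hθu, ← Finset.mul_sum, mul_eq_zero,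
      exp_ne_zero, false_or] using hvan (c • θstar)
  have hnorm : ‖u‖ ^ 2 = 0 := by
    refine eq_zero_of_forall_sum_exp_neg_mul_mul_sq_sub_eq_zero (fun g => by positivity)
      (fun g hg => ?_) (i₀ := 1) (by simp) hray
    have hfix : θstar = (g : Iso d) θstar := sub_eq_zero.mp (by simpa using hg)
    rw [hfix, LinearIsometryEquiv.inner_map_map, hθu]
  simpa using hnorm
end
end

section
/- Suppose there exists g ∈ G with gθ* ≠ θ*. Let u ∈ ℝ^d with u ≠ 0 and let t ∈ ℝ satisfy |t| < (2‖u‖)^{-1} · min{ ‖gθ* − θ*‖ : g ∈ G, gθ* ≠ θ* }. Then every g ∈ G with g(θ* + tu) = θ* + tu also satisfies gθ* = θ*; in other words, the stabilizer of θ* + tu in G is contained in (and hence a subgroup of) the stabilizer of θ* in G. -/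
open scoped BigOperators RealInnerProductSpace

noncomputable section

/-- If some `g ∈ G` moves `θ*` and
`|t| < (2‖u‖)⁻¹ min{‖gθ* - θ*‖ : g ∈ G, gθ* ≠ θ*}` for `u ≠ 0`, then the stabilizer of
`θ* + tu` in `G` is contained in the stabilizer of `θ*`. -/
theorem stabilizer_of_perturbation {d : ℕ} (G : Subgroup (Iso d)) [Fintype G]
    (θstar : Euc d) (hex : ∃ g : Iso d, g ∈ G ∧ g θstar ≠ θstar)
    (u : Euc d) (hu : u ≠ 0) (t : ℝ)
    (ht : |t| < (2 * ‖u‖)⁻¹ *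
      ⨅ g : {g : G // (g : Iso d) θstar ≠ θstar}, ‖((g : G) : Iso d) θstar - θstar‖) :
    ∀ g : Iso d, g ∈ G → g (θstar + t • u) = θstar + t • u → g θstar = θstar := by
  intro g hg hfix
  by_contra hne
  set M := ⨅ g : {g : G // (g : Iso d) θstar ≠ θstar}, ‖((g : G) : Iso d) θstar - θstar‖
    with hM
  have hbdd : BddBelow (Set.range fun g : {g : G // (g : Iso d) θstar ≠ θstar} =>
      ‖((g : G) : Iso d) θstar - θstar‖) := by
    refine ⟨0, ?_⟩
    rintro x ⟨y, rfl⟩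
    positivity
  have hM_le : M ≤ ‖g θstar - θstar‖ :=
    ciInf_le hbdd ⟨⟨g, hg⟩, hne⟩
  have hkey : g θstar - θstar = t • u - t • (g u) := by
    have h : g θstar + t • (g u) = θstar + t • u := by
      rw [← map_smul, ← map_add]; exact hfix
    have h2 : g θstar = θstar + t • u - t • (g u) := by rw [← h]; abel
    rw [h2]; abel
  have hnorm : ‖g θstar - θstar‖ ≤ 2 * (|t| * ‖u‖) := by
    rw [hkey]
    calc ‖t • u - t • (g u)‖ ≤ ‖t • u‖ + ‖t • (g u)‖ := norm_sub_le _ _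
      _ = |t| * ‖u‖ + |t| * ‖g u‖ := by rw [norm_smul, norm_smul]; simp [Real.norm_eq_abs]
      _ = 2 * (|t| * ‖u‖) := by rw [g.norm_map]; ring
  have h2u : (0:ℝ) < 2 * ‖u‖ := by
    have : 0 < ‖u‖ := norm_pos_iff.mpr hu
    linarith
  have := mul_lt_mul_of_pos_left ht h2u
  rw [← mul_assoc, mul_inv_cancel₀ (ne_of_gt h2u), one_mul] at this
  nlinarith [hM_le, hnorm]
end
end
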